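/- Let (X,d) be a complete Busemann convex geodesic space that is additionally δ-hyperbolic, let λ ≥ 1, and let M ≥ 0 be such that every λ-quasi-geodesic triangle in X is M-slim. If a closed convex subset A ⊆ X contains a k-local λ-quasi-geodesic ray with k > 8λM, then A contains a geodesic ray. -/

import Mathlib

open Set Filter Metric

section Defs

variable {X : Type*} [MetricSpace X]

/-- A unit-speed geodesic defined on `[a, b]`. -/
def IsGeodesicOn (γ : ℝ → X) (a b : ℝ) : Prop :=
  ∀ s ∈ Set.Icc a b, ∀ t ∈ Set.Icc a b, dist (γ s) (γ t) = |s - t|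

/-- `S` is a geodesic segment joining `x` and `y`. -/
def IsGeodesicSegment (S : Set X) (x y : X) : Prop :=
  ∃ (a b : ℝ) (γ : ℝ → X), a ≤ b ∧ IsGeodesicOn γ a b ∧ γ a = x ∧ γ b = y ∧
    S = γ '' Set.Icc a b

/-- A geodesic space: every two points are joined by a geodesic segment. -/
def GeodesicSpace (X : Type*) [MetricSpace X] : Prop :=
  ∀ x y : X, ∃ S : Set X, IsGeodesicSegment S x y

/-- A uniquely geodesic space. -/
def UniquelyGeodesic (X : Type*) [MetricSpace X] : Prop :=
  ∀ x y : X, ∃! S : Set X, IsGeodesicSegment S x y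

/-- `S` is contained in the closed `M`-neighborhood of `T`. -/
def InClosedNbhd (S T : Set X) (M : ℝ) : Prop :=
  ∀ p ∈ S, ∃ q ∈ T, dist p q ≤ M

/-- A triangle with sides `S1, S2, S3` is `M`-slim. -/
def SlimTriangle (S1 S2 S3 : Set X) (M : ℝ) : Prop :=
  InClosedNbhd S1 (S2 ∪ S3) M ∧ InClosedNbhd S2 (S1 ∪ S3) M ∧ InClosedNbhd S3 (S1 ∪ S2) M

/-- `X` is `δ`-hyperbolic: every geodesic triangle is `δ`-slim. -/
def DeltaHyperbolic (X : Type*) [MetricSpace X] (δ : ℝ) : Prop :=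
  ∀ x y z : X, ∀ S1 S2 S3 : Set X,
    IsGeodesicSegment S1 x y → IsGeodesicSegment S2 y z → IsGeodesicSegment S3 z x →
    SlimTriangle S1 S2 S3 δ

/-- A geodesic ray `γ : [0, ∞) → X`. -/
def IsGeodesicRay (γ : ℝ → X) : Prop :=
  ∀ s ∈ Set.Ici (0:ℝ), ∀ t ∈ Set.Ici (0:ℝ), dist (γ s) (γ t) = |s - t|

/-- A set is geodesically bounded if it contains no geodesic ray. -/
def GeodesicallyBounded (A : Set X) : Prop :=
  ¬ ∃ γ : ℝ → X, IsGeodesicRay γ ∧ ∀ t ∈ Set.Ici (0:ℝ), γ t ∈ A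

/-- A directional curve `γ : [0, ∞) → X` (with some constant `b ≥ 0`). -/
def IsDirectionalCurve (γ : ℝ → X) : Prop :=
  ∃ b : ℝ, 0 ≤ b ∧ ∀ s ∈ Set.Ici (0:ℝ), ∀ t ∈ Set.Ici (0:ℝ),
    |s - t| - b ≤ dist (γ s) (γ t) ∧ dist (γ s) (γ t) ≤ |s - t|

/-- A set is directionally bounded if it contains no directional curve. -/
def DirectionallyBounded (A : Set X) : Prop :=
  ¬ ∃ γ : ℝ → X, IsDirectionalCurve γ ∧ ∀ t ∈ Set.Ici (0:ℝ), γ t ∈ A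

/-- A subset of a geodesic space is convex if every geodesic segment joining two of its
points is contained in it. -/
def GeodesicConvex (A : Set X) : Prop :=
  ∀ x ∈ A, ∀ y ∈ A, ∀ S : Set X, IsGeodesicSegment S x y → S ⊆ A

/-- The comparison point in the Euclidean plane: the point on the segment from `x'` to `y'`
(of length `L`) at distance `t` from `x'`. -/
noncomputable def cmpPt (x' y' : EuclideanSpace ℝ (Fin 2)) (L t : ℝ) :
    EuclideanSpace ℝ (Fin 2) :=
  AffineMap.lineMap x' y' (t / L)

/-- `X` is a CAT(0) space: it is geodesic and for every geodesic triangle and every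
comparison triangle in the Euclidean plane, distances between points on the triangle are
bounded by the distances between the corresponding comparison points. -/
def CAT0Space (X : Type*) [MetricSpace X] : Prop :=
  GeodesicSpace X ∧
  ∀ (x y z : X) (γ1 γ2 γ3 : ℝ → X),
    IsGeodesicOn γ1 0 (dist x y) → γ1 0 = x → γ1 (dist x y) = y →
    IsGeodesicOn γ2 0 (dist y z) → γ2 0 = y → γ2 (dist y z) = z →
    IsGeodesicOn γ3 0 (dist z x) → γ3 0 = z → γ3 (dist z x) = x →
    ∀ x' y' z' : EuclideanSpace ℝ (Fin 2),
      dist x' y' = dist x y → dist y' z' = dist y z → dist z' x' = dist z x →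
      (∀ s ∈ Set.Icc (0:ℝ) (dist x y), ∀ t ∈ Set.Icc (0:ℝ) (dist y z),
        dist (γ1 s) (γ2 t) ≤ dist (cmpPt x' y' (dist x y) s) (cmpPt y' z' (dist y z) t)) ∧
      (∀ s ∈ Set.Icc (0:ℝ) (dist y z), ∀ t ∈ Set.Icc (0:ℝ) (dist z x),
        dist (γ2 s) (γ3 t) ≤ dist (cmpPt y' z' (dist y z) s) (cmpPt z' x' (dist z x) t)) ∧
      (∀ s ∈ Set.Icc (0:ℝ) (dist z x), ∀ t ∈ Set.Icc (0:ℝ) (dist x y),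
        dist (γ3 s) (γ1 t) ≤ dist (cmpPt z' x' (dist z x) s) (cmpPt x' y' (dist x y) t))

/-- Busemann convexity. -/
def BusemannConvex (X : Type*) [MetricSpace X] : Prop :=
  GeodesicSpace X ∧
  ∀ (a b c d : ℝ) (γ σ : ℝ → X), a ≤ b → c ≤ d →
    IsGeodesicOn γ a b → IsGeodesicOn σ c d →
    ∀ t ∈ Set.Icc (0:ℝ) 1,
      dist (γ ((1-t)*a + t*b)) (σ ((1-t)*c + t*d)) ≤
        (1-t) * dist (γ a) (σ c) + t * dist (γ b) (σ d)

/-- A `(lam, eps)`-quasi-geodesic defined on `[a, b]`. -/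
def IsQuasiGeodesicOn (lam eps : ℝ) (γ : ℝ → X) (a b : ℝ) : Prop :=
  ∀ s ∈ Set.Icc a b, ∀ t ∈ Set.Icc a b,
    (1/lam) * |s - t| - eps ≤ dist (γ s) (γ t) ∧ dist (γ s) (γ t) ≤ lam * |s - t| + eps

/-- A `(lam, eps)`-quasi-geodesic ray. -/
def IsQuasiGeodesicRay (lam eps : ℝ) (γ : ℝ → X) : Prop :=
  ∀ s ∈ Set.Ici (0:ℝ), ∀ t ∈ Set.Ici (0:ℝ),
    (1/lam) * |s - t| - eps ≤ dist (γ s) (γ t) ∧ dist (γ s) (γ t) ≤ lam * |s - t| + eps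

/-- A `k`-local `lam`-quasi-geodesic ray: a `(lam, eps)`-quasi-geodesic ray locally,
for every `eps > 0`. -/
def IsLocalQuasiGeodesicRay (k lam : ℝ) (γ : ℝ → X) : Prop :=
  ∀ eps > (0:ℝ), ∀ s ∈ Set.Ici (0:ℝ), ∀ t ∈ Set.Ici (0:ℝ), |s - t| ≤ k →
    (1/lam) * |s - t| - eps ≤ dist (γ s) (γ t) ∧ dist (γ s) (γ t) ≤ lam * |s - t| + eps

/-- `S` is the image of a `lam`-quasi-geodesic joining `x` and `y`
(i.e. a `(lam, eps)`-quasi-geodesic for every `eps > 0`). -/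
def IsQuasiGeodesicSegment (lam : ℝ) (S : Set X) (x y : X) : Prop :=
  ∃ (a b : ℝ) (γ : ℝ → X), a ≤ b ∧ (∀ eps > (0:ℝ), IsQuasiGeodesicOn lam eps γ a b) ∧
    γ a = x ∧ γ b = y ∧ S = γ '' Set.Icc a b

/-- Every `lam`-quasi-geodesic triangle in `X` is `M`-slim. -/
def QuasiGeodesicTrianglesSlim (X : Type*) [MetricSpace X] (lam M : ℝ) : Prop :=
  ∀ x y z : X, ∀ S1 S2 S3 : Set X,
    IsQuasiGeodesicSegment lam S1 x y → IsQuasiGeodesicSegment lam S2 y z →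
    IsQuasiGeodesicSegment lam S3 z x → SlimTriangle S1 S2 S3 M

/-- A play of the Lion-Man game in `A` with speed `D`. -/
def IsLionManPlay (A : Set X) (D : ℝ) (L M : ℕ → X) : Prop :=
  (∀ n, L n ∈ A) ∧ (∀ n, M n ∈ A) ∧
  (∀ n, ∃ S : Set X, IsGeodesicSegment S (L n) (M n) ∧ L (n+1) ∈ S) ∧
  (∀ n, dist (L n) (L (n+1)) = min D (dist (L n) (M n))) ∧
  (∀ n, dist (M n) (M (n+1)) ≤ D)

/-- The lion wins a play if `d(L_{n+1}, M_n) → 0`. -/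
def LionWins (L M : ℕ → X) : Prop :=
  Filter.Tendsto (fun n => dist (L (n+1)) (M n)) Filter.atTop (nhds 0)

/-- The lion always wins the Lion-Man game played in `A`. -/
def LionAlwaysWins (A : Set X) : Prop :=
  ∀ D > (0:ℝ), ∀ L M : ℕ → X, IsLionManPlay A D L M → LionWins L M

end Defs

/-!
Sample the local quasi-geodesic at spacing `k / 2`, getting a chain `y n` with `p = y 0`.
Slimness of the quasi-geodesic triangles `p, y n, y (n + 2)`, whose middle side is a piece of
`γ` of length `k`, makes every step gain `k / (2λ) - 2M > 0` in distance from `p`, so the chain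
escapes linearly. By `δ`-hyperbolicity, geodesics between far-out chain points then stay far from
`p`, so the geodesics `[p, y n]` and `[p, y m]` are `2δ`-close at any fixed time `T` once `n` is
large. Busemann convexity shrinks this to `2δ t / T` at time `t`, so the geodesics `[p, y n]`
converge pointwise, by completeness, to a geodesic ray; it lies in `A` because `A` is closed and
convex.
-/

open Topology

section Geodesics

variable {X : Type*} [MetricSpace X]

def IsGeodesicPath (σ : ℝ → X) (x y : X) : Prop :=
  IsGeodesicOn σ 0 (dist x y) ∧ σ 0 = x ∧ σ (dist x y) = y

lemma IsGeodesicOn.mono {σ : ℝ → X} {a b a' b' : ℝ} (h : IsGeodesicOn σ a b)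
    (ha : a ≤ a') (hb : b' ≤ b) : IsGeodesicOn σ a' b' :=
  fun s hs t ht => h s ⟨ha.trans hs.1, hs.2.trans hb⟩ t ⟨ha.trans ht.1, ht.2.trans hb⟩

lemma GeodesicSpace.exists_isGeodesicPath (hX : GeodesicSpace X) (x y : X) :
    ∃ σ : ℝ → X, IsGeodesicPath σ x y := by
  obtain ⟨S, a, b, σ, hab, hσ, rfl, rfl, -⟩ := hX x y
  have hlen : dist (σ a) (σ b) = b - a := by
    rw [hσ a ⟨le_rfl, hab⟩ b ⟨hab, le_rfl⟩, abs_sub_comm, abs_of_nonneg (sub_nonneg.2 hab)]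
  refine ⟨fun t => σ (a + t), fun s hs t ht => ?_, by simp, by simp [hlen]⟩
  rw [hlen] at hs ht
  rw [hσ (a + s) ⟨by linarith [hs.1], by linarith [hs.2]⟩ (a + t)
    ⟨by linarith [ht.1], by linarith [ht.2]⟩, add_sub_add_left_eq_sub]

lemma IsGeodesicPath.isGeodesicSegment {σ : ℝ → X} {x y : X} (h : IsGeodesicPath σ x y) :
    IsGeodesicSegment (σ '' Icc 0 (dist x y)) x y :=
  ⟨0, dist x y, σ, dist_nonneg, h.1, h.2.1, h.2.2, rfl⟩

lemma IsGeodesicPath.dist_left {σ : ℝ → X} {x y : X} (h : IsGeodesicPath σ x y) {t : ℝ}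
    (ht : t ∈ Icc 0 (dist x y)) : dist x (σ t) = t := by
  rw [← h.2.1, h.1 0 ⟨le_rfl, dist_nonneg⟩ t ht, zero_sub, abs_neg, abs_of_nonneg ht.1]

namespace IsGeodesicSegment

variable {S : Set X} {x y : X}

lemma left_mem (h : IsGeodesicSegment S x y) : x ∈ S := by
  obtain ⟨a, b, σ, hab, -, rfl, -, rfl⟩ := h
  exact ⟨a, ⟨le_rfl, hab⟩, rfl⟩

lemma symm (h : IsGeodesicSegment S x y) : IsGeodesicSegment S y x := by
  obtain ⟨a, b, σ, hab, hσ, rfl, rfl, rfl⟩ := h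
  refine ⟨a, b, fun t => σ (a + b - t), hab, fun s hs t ht => ?_, by simp, by simp, ?_⟩
  · rw [hσ (a + b - s) ⟨by linarith [hs.2], by linarith [hs.1]⟩ (a + b - t)
      ⟨by linarith [ht.2], by linarith [ht.1]⟩, sub_sub_sub_cancel_left, abs_sub_comm]
  · rw [show (fun t => σ (a + b - t)) = σ ∘ (fun t => a + b - t) from rfl, image_comp,
      image_const_sub_Icc, add_sub_cancel_right, add_sub_cancel_left]

lemma right_mem (h : IsGeodesicSegment S x y) : y ∈ S :=
  h.symm.left_mem

lemma dist_add_dist_eq (h : IsGeodesicSegment S x y) {w : X} (hw : w ∈ S) :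
    dist x w + dist w y = dist x y := by
  obtain ⟨a, b, σ, hab, hσ, rfl, rfl, rfl⟩ := h
  obtain ⟨u, hu, rfl⟩ := hw
  rw [hσ a ⟨le_rfl, hab⟩ u hu, hσ u hu b ⟨hab, le_rfl⟩, hσ a ⟨le_rfl, hab⟩ b ⟨hab, le_rfl⟩,
    abs_of_nonpos (by linarith [hu.1]), abs_of_nonpos (by linarith [hu.2]),
    abs_of_nonpos (by linarith)]
  ring

lemma dist_le (h : IsGeodesicSegment S x y) {w : X} (hw : w ∈ S) : dist x w ≤ dist x y := by
  linarith [h.dist_add_dist_eq hw, dist_nonneg (x := w) (y := y)]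

lemma isQuasiGeodesicSegment (h : IsGeodesicSegment S x y) {lam : ℝ} (hlam : 1 ≤ lam) :
    IsQuasiGeodesicSegment lam S x y := by
  obtain ⟨a, b, σ, hab, hσ, rfl, rfl, rfl⟩ := h
  refine ⟨a, b, σ, hab, fun eps heps s hs t ht => ?_, rfl, rfl, rfl⟩
  rw [hσ s hs t ht]
  have hinv : 1 / lam * |s - t| ≤ |s - t| :=
    mul_le_of_le_one_left (abs_nonneg _) ((div_le_one (by linarith)).2 hlam)
  constructor <;> nlinarith [abs_nonneg (s - t)]

end IsGeodesicSegment

end Geodesics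

namespace IsLocalQuasiGeodesicRay

variable {X : Type*} [MetricSpace X] {k lam : ℝ} {γ : ℝ → X}

lemma le_dist (hγ : IsLocalQuasiGeodesicRay k lam γ) {s t : ℝ} (hs : 0 ≤ s) (ht : 0 ≤ t)
    (hst : |s - t| ≤ k) : 1 / lam * |s - t| ≤ dist (γ s) (γ t) :=
  le_of_forall_pos_le_add fun eps heps => by linarith [(hγ eps heps s hs t ht hst).1]

lemma dist_le (hγ : IsLocalQuasiGeodesicRay k lam γ) {s t : ℝ} (hs : 0 ≤ s) (ht : 0 ≤ t)
    (hst : |s - t| ≤ k) : dist (γ s) (γ t) ≤ lam * |s - t| :=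
  le_of_forall_pos_le_add fun eps heps => (hγ eps heps s hs t ht hst).2

lemma isQuasiGeodesicSegment (hγ : IsLocalQuasiGeodesicRay k lam γ) {a b : ℝ} (ha : 0 ≤ a)
    (hab : a ≤ b) (hbk : b ≤ a + k) :
    IsQuasiGeodesicSegment lam (γ '' Icc a b) (γ a) (γ b) := by
  refine ⟨a, b, γ, hab, fun eps heps s hs t ht => ?_, rfl, rfl, rfl⟩
  exact hγ eps heps s (ha.trans hs.1) t (ha.trans ht.1)
    (abs_sub_le_iff.2 ⟨by linarith [hs.2, ht.1], by linarith [hs.1, ht.2]⟩)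

end IsLocalQuasiGeodesicRay

namespace QuasiGeodesicTrianglesSlim

variable {X : Type*} [MetricSpace X] {lam M : ℝ}

/-- `y` is `M`-close to a geodesic `[p, x]` or `[z, p]`. -/
lemma dist_add_dist_le_or (hX : GeodesicSpace X) (hlam : 1 ≤ lam)
    (hslim : QuasiGeodesicTrianglesSlim X lam M) {p x y z : X} {S : Set X}
    (hS : IsQuasiGeodesicSegment lam S x z) (hy : y ∈ S) :
    dist p y + dist x y ≤ dist p x + 2 * M ∨ dist p y + dist y z ≤ dist p z + 2 * M := by
  obtain ⟨S₁, hS₁⟩ := hX p x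
  obtain ⟨S₃, hS₃⟩ := hX z p
  obtain ⟨w, hw, hyw⟩ := (hslim p x z S₁ S S₃ (hS₁.isQuasiGeodesicSegment hlam) hS
    (hS₃.isQuasiGeodesicSegment hlam)).2.1 y hy
  rcases hw with hw | hw
  · have := hS₁.dist_add_dist_eq hw
    left
    linarith [dist_triangle p w y, dist_triangle x w y, dist_comm x w, dist_comm w y]
  · have := hS₃.dist_add_dist_eq hw
    right
    linarith [dist_triangle p w y, dist_triangle y w z, dist_comm y w, dist_comm z w,
      dist_comm w p, dist_comm z p]

/-- Inductively, `y (n + 1)` cannot be `M`-close to `[y 0, y n]`, as that would undo the previous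
step; so it is close to `[y 0, y (n + 2)]`, and each step gains `a - 2M`. -/
lemma mul_le_dist (hX : GeodesicSpace X) (hlam : 1 ≤ lam)
    (hslim : QuasiGeodesicTrianglesSlim X lam M) (hM : 0 ≤ M) {y : ℕ → X} {a : ℝ}
    (ha : 2 * M < a) (hstep : ∀ n, a ≤ dist (y n) (y (n + 1)))
    (hmid : ∀ n, ∃ S, IsQuasiGeodesicSegment lam S (y n) (y (n + 2)) ∧ y (n + 1) ∈ S)
    (n : ℕ) : (a - 2 * M) * n ≤ dist (y 0) (y n) := by
  have hprogress : ∀ n, dist (y 0) (y n) + (a - 2 * M) ≤ dist (y 0) (y (n + 1)) := by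
    intro n
    induction n with
    | zero => simp only [dist_self, zero_add]; linarith [hstep 0]
    | succ n ih =>
      obtain ⟨S, hS, hyS⟩ := hmid n
      rcases hslim.dist_add_dist_le_or hX hlam hS hyS (p := y 0) with h | h
      · linarith [hstep n]
      · linarith [hstep (n + 1)]
  induction n with
  | zero => simp
  | succ n ih => push_cast; linarith [hprogress n]

end QuasiGeodesicTrianglesSlim

section Chords

variable {X : Type*} [MetricSpace X] {p : X} {y : ℕ → X} {c δ : ℝ}

def ChordsFarFrom (p : X) (y : ℕ → X) (c C : ℝ) (g : ℕ) : Prop :=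
  ∀ i S, IsGeodesicSegment S (y i) (y (i + g)) → ∀ q ∈ S, c * i - C ≤ dist p q

lemma ChordsFarFrom.mono {C C' : ℝ} {g : ℕ} (h : ChordsFarFrom p y c C g) (hC : C ≤ C') :
    ChordsFarFrom p y c C' g :=
  fun i S hS q hq => by linarith [h i S hS q hq]

lemma chordsFarFrom_one {L : ℝ} (hesc : ∀ n : ℕ, c * n ≤ dist p (y n))
    (hstep : ∀ n, dist (y n) (y (n + 1)) ≤ L) : ChordsFarFrom p y c L 1 :=
  fun i _ hS q hq => by
    linarith [hesc i, hstep i, hS.dist_le hq, dist_triangle p q (y i), dist_comm q (y i)]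

/-- Slimness of the triangle `y i, y (i + a), y (i + a + b)` lets chord bounds be concatenated. -/
lemma ChordsFarFrom.add (hX : GeodesicSpace X) (hhyp : DeltaHyperbolic X δ) {C C' : ℝ}
    {a b : ℕ} (h₁ : ChordsFarFrom p y c C a) (h₂ : ChordsFarFrom p y c C' b) :
    ChordsFarFrom p y c (max C (C' - c * a) + δ) (a + b) := by
  intro i S hS q hq
  obtain ⟨S₁, hS₁⟩ := hX (y i) (y (i + a))
  obtain ⟨S₂, hS₂⟩ := hX (y (i + a)) (y (i + a + b))
  rw [← add_assoc] at hS
  obtain ⟨q', hq', hqq'⟩ := (hhyp _ _ _ S₁ S₂ S hS₁ hS₂ hS.symm).2.2 q hq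
  have hpq : dist p q' ≤ dist p q + δ := by linarith [dist_triangle p q q']
  rcases hq' with hq' | hq'
  · linarith [h₁ i S₁ hS₁ q' hq', le_max_left C (C' - c * a)]
  · have := h₂ (i + a) S₂ hS₂ q' hq'
    push_cast at this
    linarith [le_max_right C (C' - c * a)]

lemma chordsFarFrom_add_mul (hX : GeodesicSpace X) (hhyp : DeltaHyperbolic X δ) (hδ : 0 ≤ δ)
    (hc : 0 ≤ c) {L : ℝ} (h₁ : ChordsFarFrom p y c L 1) {g : ℕ} (hg : 1 ≤ g) :
    ChordsFarFrom p y c (L + δ * g) g := by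
  induction g, hg using Nat.le_induction with
  | base => exact h₁.mono (by simpa using hδ)
  | succ g _ ih =>
    rw [add_comm g]
    refine (h₁.add hX hhyp ih).mono ?_
    push_cast
    exact add_le_of_le_sub_right (max_le (by nlinarith) (by linarith))

/-- Splitting off chords of a fixed span `e` with `δ ≤ c * e`, the loss `δ` per split is paid
for by the escape `c * e`, so the bound no longer degrades with the span. -/
lemma exists_chordsFarFrom (hX : GeodesicSpace X) (hhyp : DeltaHyperbolic X δ) (hδ : 0 ≤ δ)
    (hc : 0 < c) {L : ℝ} (h₁ : ChordsFarFrom p y c L 1) :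
    ∃ C, ∀ g, 1 ≤ g → ChordsFarFrom p y c C g := by
  obtain ⟨e, he⟩ := exists_nat_ge (δ / c)
  rw [div_le_iff₀ hc] at he
  refine ⟨L + δ * (e + 2), fun g => ?_⟩
  induction g using Nat.strong_induction_on with
  | _ g ih =>
  intro hg
  rcases le_or_gt g (e + 1) with hge | hge
  · refine (chordsFarFrom_add_mul hX hhyp hδ hc.le h₁ hg).mono ?_
    have : (g : ℝ) ≤ e + 1 := by exact_mod_cast hge
    nlinarith
  · obtain ⟨g', rfl⟩ : ∃ g', g = (e + 1) + g' := ⟨g - (e + 1), by omega⟩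
    refine ((chordsFarFrom_add_mul hX hhyp hδ hc.le h₁ (Nat.le_add_left 1 e)).add hX hhyp
      (ih g' (by omega) (by omega))).mono ?_
    push_cast
    exact add_le_of_le_sub_right (max_le (by linarith) (by linarith))

end Chords

section Rays

variable {X : Type*} [MetricSpace X]

/-- The point at time `T` on `[p, x]` is `δ`-close to a point of `[p, x']` (the side `[x, x']` is
too far away), hence `2δ`-close to the point at time `T` on `[p, x']`. -/
lemma DeltaHyperbolic.dist_le_of_lt_dist {δ : ℝ} (hhyp : DeltaHyperbolic X δ) (hδ : 0 ≤ δ)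
    {p x x' : X} {σ σ' : ℝ → X} (hσ : IsGeodesicPath σ p x) (hσ' : IsGeodesicPath σ' p x')
    {S : Set X} (hS : IsGeodesicSegment S x x') {T : ℝ} (hT : 0 ≤ T)
    (hfar : ∀ q ∈ S, T + δ < dist p q) : dist (σ T) (σ' T) ≤ 2 * δ := by
  have hTx : T ∈ Icc 0 (dist p x) := ⟨hT, by linarith [hfar x hS.left_mem]⟩
  have hTx' : T ∈ Icc 0 (dist p x') := ⟨hT, by linarith [hfar x' hS.right_mem]⟩
  obtain ⟨q, hq, hTq⟩ := (hhyp p x x' _ S _ hσ.isGeodesicSegment hS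
    hσ'.isGeodesicSegment.symm).1 (σ T) ⟨T, hTx, rfl⟩
  have hpT := hσ.dist_left hTx
  rcases hq with hq | ⟨u, hu, rfl⟩
  · linarith [hfar q hq, dist_triangle p (σ T) q]
  · have huT : |u - T| ≤ δ := by
      have := abs_dist_sub_le (σ' u) (σ T) p
      rw [dist_comm (σ' u) p, dist_comm (σ T) p, hσ'.dist_left hu, hpT, dist_comm] at this
      exact this.trans hTq
    calc dist (σ T) (σ' T) ≤ dist (σ T) (σ' u) + dist (σ' u) (σ' T) := dist_triangle _ _ _
      _ ≤ δ + δ := add_le_add hTq (by rwa [hσ'.1 u hu T hTx'])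
      _ = 2 * δ := by ring

lemma BusemannConvex.dist_le_div_mul (hB : BusemannConvex X) {σ σ' : ℝ → X} {T t : ℝ}
    (hσ : IsGeodesicOn σ 0 T) (hσ' : IsGeodesicOn σ' 0 T) (h0 : σ 0 = σ' 0) (hT : 0 < T)
    (ht : 0 ≤ t) (htT : t ≤ T) : dist (σ t) (σ' t) ≤ t / T * dist (σ T) (σ' T) := by
  have := hB.2 0 T 0 T σ σ' hT.le hT.le hσ hσ' (t / T)
    ⟨div_nonneg ht hT.le, (div_le_one hT).2 htT⟩
  rwa [mul_zero, zero_add, div_mul_cancel₀ t hT.ne', h0, dist_self, mul_zero, zero_add] at this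

/-- Busemann convexity turns a uniform bound `K` at time `T` into the bound `t / T * K` at time
`t`; letting `T → ∞` makes the sequence `σ n t` Cauchy. -/
lemma BusemannConvex.cauchySeq_of_eventually_dist_le (hB : BusemannConvex X)
    {σ : ℕ → ℝ → X} {ℓ : ℕ → ℝ} (hℓ : Tendsto ℓ atTop atTop)
    (hσ : ∀ n, IsGeodesicOn (σ n) 0 (ℓ n)) (hσ0 : ∀ n m, σ n 0 = σ m 0) {K : ℝ}
    (hK : ∀ T, 0 ≤ T → ∀ᶠ n in atTop, ∀ m ≥ n, dist (σ n T) (σ m T) ≤ K) {t : ℝ}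
    (ht : 0 ≤ t) : CauchySeq fun n => σ n t := by
  rw [Metric.cauchySeq_iff']
  intro ε hε
  obtain ⟨T, htT, hT, hKT⟩ : ∃ T, t ≤ T ∧ 0 < T ∧ K * t / ε < T :=
    ⟨max (max t 1) (K * t / ε + 1), (le_max_left _ _).trans (le_max_left _ _),
      zero_lt_one.trans_le ((le_max_right _ _).trans (le_max_left _ _)),
      (lt_add_one _).trans_le (le_max_right _ _)⟩
  obtain ⟨N, hN⟩ := ((hK T hT.le).and (hℓ.eventually_ge_atTop T)).exists_forall_of_atTop
  refine ⟨N, fun n hn => ?_⟩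
  calc dist (σ n t) (σ N t) ≤ t / T * dist (σ n T) (σ N T) :=
        hB.dist_le_div_mul ((hσ n).mono le_rfl (hN n hn).2) ((hσ N).mono le_rfl (hN N le_rfl).2)
          (hσ0 n N) hT ht htT
    _ ≤ t / T * K := by
        rw [dist_comm]
        exact mul_le_mul_of_nonneg_left ((hN N le_rfl).1 n hn) (by positivity)
    _ < ε := by
        rw [div_mul_eq_mul_div, div_lt_iff₀ hT]
        rw [div_lt_iff₀ hε] at hKT
        linarith

lemma isGeodesicRay_of_tendsto {σ : ℕ → ℝ → X} {ℓ : ℕ → ℝ} (hℓ : Tendsto ℓ atTop atTop)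
    (hσ : ∀ n, IsGeodesicOn (σ n) 0 (ℓ n)) {ρ : ℝ → X}
    (hρ : ∀ t, 0 ≤ t → Tendsto (fun n => σ n t) atTop (𝓝 (ρ t))) : IsGeodesicRay ρ := by
  intro s hs t ht
  refine tendsto_nhds_unique ((hρ s hs).dist (hρ t ht)) (tendsto_const_nhds.congr' ?_)
  filter_upwards [hℓ.eventually_ge_atTop s, hℓ.eventually_ge_atTop t] with n hsn htn
  exact (hσ n s ⟨hs, hsn⟩ t ⟨ht, htn⟩).symm

lemma BusemannConvex.exists_isGeodesicRay_tendsto [CompleteSpace X] (hB : BusemannConvex X)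
    {p : X} {σ : ℕ → ℝ → X} {ℓ : ℕ → ℝ} (hℓ : Tendsto ℓ atTop atTop)
    (hσ : ∀ n, IsGeodesicOn (σ n) 0 (ℓ n)) (hσ0 : ∀ n, σ n 0 = p) {K : ℝ}
    (hK : ∀ T, 0 ≤ T → ∀ᶠ n in atTop, ∀ m ≥ n, dist (σ n T) (σ m T) ≤ K) :
    ∃ ρ, IsGeodesicRay ρ ∧ ∀ t, 0 ≤ t → Tendsto (fun n => σ n t) atTop (𝓝 (ρ t)) := by
  have : Nonempty X := ⟨p⟩
  choose! ρ hρ using fun t (ht : 0 ≤ t) => cauchySeq_tendsto_of_complete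
    (hB.cauchySeq_of_eventually_dist_le hℓ hσ (fun n m => (hσ0 n).trans (hσ0 m).symm) hK ht)
  exact ⟨ρ, isGeodesicRay_of_tendsto hℓ hσ hρ, hρ⟩

end Rays

section LinearEscape

variable {X : Type*} [MetricSpace X]

lemma eventually_dist_geodesicPath_le (hX : GeodesicSpace X) {δ : ℝ}
    (hhyp : DeltaHyperbolic X δ) (hδ : 0 ≤ δ) {p : X} {y : ℕ → X} {c C : ℝ} (hc : 0 < c)
    (hC : ∀ g, 1 ≤ g → ChordsFarFrom p y c C g) {σ : ℕ → ℝ → X}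
    (hσ : ∀ n, IsGeodesicPath (σ n) p (y n)) {T : ℝ} (hT : 0 ≤ T) :
    ∀ᶠ n in atTop, ∀ m ≥ n, dist (σ n T) (σ m T) ≤ 2 * δ := by
  obtain ⟨N, hN⟩ := exists_nat_gt ((T + δ + C) / c)
  rw [div_lt_iff₀ hc] at hN
  filter_upwards [eventually_ge_atTop N] with n hn m hm
  obtain rfl | hnm := hm.eq_or_lt
  · rw [dist_self]
    positivity
  obtain ⟨g, hg, rfl⟩ : ∃ g, 1 ≤ g ∧ m = n + g := ⟨m - n, by omega, by omega⟩
  obtain ⟨S, hS⟩ := hX (y n) (y (n + g))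
  refine hhyp.dist_le_of_lt_dist hδ (hσ n) (hσ _) hS hT fun q hq => ?_
  have hcn : c * N ≤ c * n := by gcongr
  linarith [hC g hg n S hS q hq]

theorem exists_isGeodesicRay_of_linear_escape [CompleteSpace X] (hB : BusemannConvex X)
    {δ : ℝ} (hδ : 0 ≤ δ) (hhyp : DeltaHyperbolic X δ) {A : Set X} (hA : IsClosed A)
    (hconv : GeodesicConvex A) {y : ℕ → X} (hyA : ∀ n, y n ∈ A) {c L : ℝ} (hc : 0 < c)
    (hesc : ∀ n : ℕ, c * n ≤ dist (y 0) (y n)) (hstep : ∀ n, dist (y n) (y (n + 1)) ≤ L) :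
    ∃ ρ : ℝ → X, IsGeodesicRay ρ ∧ ∀ t ∈ Ici (0 : ℝ), ρ t ∈ A := by
  obtain ⟨C, hC⟩ := exists_chordsFarFrom hB.1 hhyp hδ hc (chordsFarFrom_one hesc hstep)
  choose σ hσ using fun n => hB.1.exists_isGeodesicPath (y 0) (y n)
  have hℓ : Tendsto (fun n => dist (y 0) (y n)) atTop atTop :=
    tendsto_atTop_mono hesc (tendsto_natCast_atTop_atTop.const_mul_atTop hc)
  obtain ⟨ρ, hρ, hlim⟩ := hB.exists_isGeodesicRay_tendsto hℓ (fun n => (hσ n).1)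
    (fun n => (hσ n).2.1) fun T hT => eventually_dist_geodesicPath_le hB.1 hhyp hδ hc hC hσ hT
  refine ⟨ρ, hρ, fun t ht => hA.mem_of_tendsto (hlim t ht) ?_⟩
  filter_upwards [hℓ.eventually_ge_atTop t] with n hn
  exact hconv _ (hyA 0) _ (hyA n) _ (hσ n).isGeodesicSegment ⟨t, ⟨ht, hn⟩, rfl⟩

end LinearEscape

/-- In a complete Busemann convex space that is additionally `δ`-hyperbolic, where every
`λ`-quasi-geodesic triangle is `M`-slim, if a closed convex set contains a `k`-local
`λ`-quasi-geodesic ray with `k > 8λM`, then it contains a geodesic ray. -/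
theorem stmt6 {X : Type*} [MetricSpace X] [CompleteSpace X]
    (hB : BusemannConvex X) (δ : ℝ) (hδ : 0 ≤ δ) (hhyp : DeltaHyperbolic X δ)
    (lam M k : ℝ) (hlam : 1 ≤ lam) (hM : 0 ≤ M)
    (hslim : QuasiGeodesicTrianglesSlim X lam M)
    (A : Set X) (hclosed : IsClosed A) (hconv : GeodesicConvex A)
    (γ : ℝ → X) (hk : k > 8 * lam * M) (hγ : IsLocalQuasiGeodesicRay k lam γ)
    (hγA : ∀ t ∈ Set.Ici (0:ℝ), γ t ∈ A) :
    ∃ σ : ℝ → X, IsGeodesicRay σ ∧ ∀ t ∈ Set.Ici (0:ℝ), σ t ∈ A := by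
  have hk0 : 0 < k := lt_of_le_of_lt (by positivity) hk
  set h := k / 2 with hh
  have hnh : ∀ n : ℕ, 0 ≤ n * h := fun n => by positivity
  have hgap : ∀ n : ℕ, |(n : ℝ) * h - (n + 1 : ℕ) * h| = h := fun n => by
    push_cast
    rw [show (n : ℝ) * h - (n + 1) * h = -h by ring, abs_neg, abs_of_pos (by positivity)]
  have hgapk : ∀ n : ℕ, |(n : ℝ) * h - (n + 1 : ℕ) * h| ≤ k := fun n => by rw [hgap]; linarith
  have hlo : ∀ n : ℕ, h / lam ≤ dist (γ (n * h)) (γ ((n + 1 : ℕ) * h)) := fun n => by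
    simpa only [hgap, one_div_mul_eq_div] using hγ.le_dist (hnh n) (hnh (n + 1)) (hgapk n)
  have hhi : ∀ n : ℕ, dist (γ (n * h)) (γ ((n + 1 : ℕ) * h)) ≤ lam * h := fun n => by
    simpa only [hgap] using hγ.dist_le (hnh n) (hnh (n + 1)) (hgapk n)
  have hmid : ∀ n : ℕ, ∃ S, IsQuasiGeodesicSegment lam S (γ (n * h)) (γ ((n + 2 : ℕ) * h)) ∧
      γ ((n + 1 : ℕ) * h) ∈ S := fun n =>
    ⟨_, hγ.isQuasiGeodesicSegment (hnh n) (by push_cast; linarith) (by push_cast; linarith),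
      _, ⟨by push_cast; linarith, by push_cast; linarith⟩, rfl⟩
  have ha : 2 * M < h / lam := by
    rw [lt_div_iff₀ (by linarith)]
    linarith
  exact exists_isGeodesicRay_of_linear_escape hB hδ hhyp hclosed hconv
    (fun n => hγA _ (hnh n)) (sub_pos.2 ha) (hslim.mul_le_dist hB.1 hlam hM ha hlo hmid) hhi
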